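/- arXiv:1307.3069 — 2 statements merged into one kernel-verified Lean document; each statement's English description precedes it below -/
import Mathlib

section
/- In the pre-Bloch group P(k) of a field k with at least 4 elements, the elements ψ(x) := [x] + [x^{-1}] for x ∈ k^× satisfy 2·ψ(x) = 0 and ψ(xy) = ψ(x) + ψ(y) for all x, y ∈ k^×. In particular, ψ : k^× → P(k) is a group homomorphism to the 2-torsion subgroup. -/
/-- The relations defining the pre-Bloch group: `[1] = 0` and the five-term relations. -/
def pbRels (k : Type) [Field k] : AddSubgroup (FreeAbelianGroup kˣ) :=
  AddSubgroup.closure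
    ({FreeAbelianGroup.of (1 : kˣ)} ∪
      {w | ∃ x y z u v : kˣ, x ≠ 1 ∧ y ≠ 1 ∧ x ≠ y ∧
        (z : k) = (y : k) / (x : k) ∧
        (u : k) = (1 - (x : k)⁻¹) / (1 - (y : k)⁻¹) ∧
        (v : k) = (1 - (x : k)) / (1 - (y : k)) ∧
        w = FreeAbelianGroup.of x - FreeAbelianGroup.of y + FreeAbelianGroup.of z
            - FreeAbelianGroup.of u + FreeAbelianGroup.of v})

/-- The pre-Bloch group (scissors congruence group) `P(k)`. -/
def PreBloch (k : Type) [Field k] := FreeAbelianGroup kˣ ⧸ pbRels k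

instance (k : Type) [Field k] : AddCommGroup (PreBloch k) :=
  inferInstanceAs (AddCommGroup (FreeAbelianGroup kˣ ⧸ pbRels k))

/-- The generator `[a]` of the pre-Bloch group. -/
def pb {k : Type} [Field k] (a : kˣ) : PreBloch k :=
  QuotientAddGroup.mk (FreeAbelianGroup.of a)

section aux

variable {k : Type} [Field k]

lemma pb_one : pb (1 : kˣ) = 0 := by
  apply (QuotientAddGroup.eq_zero_iff _).2
  exact AddSubgroup.subset_closure (Or.inl rfl)

lemma pb_five (x y z u v : kˣ) (hx : x ≠ 1) (hy : y ≠ 1) (hxy : x ≠ y)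
    (hz : (z : k) = (y : k) / (x : k))
    (hu : (u : k) = (1 - (x : k)⁻¹) / (1 - (y : k)⁻¹))
    (hv : (v : k) = (1 - (x : k)) / (1 - (y : k))) :
    pb x - pb y + pb z - pb u + pb v = 0 := by
  have hmem : (FreeAbelianGroup.of x - FreeAbelianGroup.of y + FreeAbelianGroup.of z
      - FreeAbelianGroup.of u + FreeAbelianGroup.of v) ∈ pbRels k :=
    AddSubgroup.subset_closure (Or.inr ⟨x, y, z, u, v, hx, hy, hxy, hz, hu, hv, rfl⟩)
  exact (QuotientAddGroup.eq_zero_iff _).2 hmem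

section fieldfacts

variable (S V : k) (hS0 : S ≠ 0) (hV0 : V ≠ 0)
  (hd : (1 : k) - V * S ≠ 0) (h1S : (1 : k) - S ≠ 0) (h1V : (1 : k) - V ≠ 0)

include hd h1V in
lemma ffE0 : (1 - V) / (1 - V * S) ≠ 0 := div_ne_zero h1V hd

include hd h1S hV0 in
lemma ff1E : (1 : k) - (1 - V) / (1 - V * S) ≠ 0 := by
  have h1E : (1 : k) - (1 - V) / (1 - V * S) = V * (1 - S) / (1 - V * S) := by
    field_simp
    ring
  rw [h1E]
  exact div_ne_zero (mul_ne_zero hV0 h1S) hd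

include hd h1S hV0 in
lemma ffE1 : (1 - V) / (1 - V * S) ≠ 1 := by
  intro h
  exact ff1E S V hV0 hd h1S (by rw [h, sub_self])

include hd h1S h1V hS0 in
lemma ffSE0 : S * ((1 - V) / (1 - V * S)) ≠ 0 :=
  mul_ne_zero hS0 (ffE0 S V hd h1V)

include hd h1S in
lemma ff1SE : (1 : k) - S * ((1 - V) / (1 - V * S)) ≠ 0 := by
  have h1SE : (1 : k) - S * ((1 - V) / (1 - V * S)) = (1 - S) / (1 - V * S) := by
    rw [eq_div_iff hd, sub_mul, mul_assoc, div_mul_cancel₀ _ hd]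
    ring
  rw [h1SE]
  exact div_ne_zero h1S hd

include hd h1S in
lemma ffSE1 : S * ((1 - V) / (1 - V * S)) ≠ 1 := by
  intro h
  exact ff1SE S V hd h1S (by rw [h, sub_self])

include hd h1S h1V in
lemma ffne : (1 - V) / (1 - V * S) ≠ S * ((1 - V) / (1 - V * S)) := by
  intro h
  have h2 : (1 : k) * ((1 - V) / (1 - V * S)) = S * ((1 - V) / (1 - V * S)) := by
    rw [one_mul]; exact h
  have h3 := mul_right_cancel₀ (ffE0 S V hd h1V) h2
  exact h1S (by rw [← h3, sub_self])

include hd h1S h1V in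
lemma ffA : S = (S * ((1 - V) / (1 - V * S))) / ((1 - V) / (1 - V * S)) := by
  rw [mul_div_assoc, div_self (ffE0 S V hd h1V), mul_one]

include hd h1S h1V hS0 in
lemma ffA' : S⁻¹ = ((1 - V) / (1 - V * S)) / (S * ((1 - V) / (1 - V * S))) := by
  have hE0 := ffE0 S V hd h1V
  field_simp
  exact (div_self (by rw [mul_comm]; exact hd)).symm

include hd h1S h1V hS0 hV0 in
lemma ffB : S * V = (1 - ((1 - V) / (1 - V * S))⁻¹)
    / (1 - (S * ((1 - V) / (1 - V * S)))⁻¹) := by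
  have hE0 := ffE0 S V hd h1V
  have hSE1 := ffSE1 S V hd h1S
  have hB : (1 : k) - (S * ((1 - V) / (1 - V * S)))⁻¹ ≠ 0 :=
    sub_ne_zero_of_ne (fun h => hSE1 (inv_eq_one.mp h.symm))
  rw [eq_div_iff hB]
  field_simp
  ring

include hd h1S h1V hS0 hV0 in
lemma ffB' : (S * V)⁻¹ = (1 - (S * ((1 - V) / (1 - V * S)))⁻¹)
    / (1 - ((1 - V) / (1 - V * S))⁻¹) := by
  have hE0 := ffE0 S V hd h1V
  have hE1 := ffE1 S V hV0 hd h1S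
  have hB : (1 : k) - ((1 - V) / (1 - V * S))⁻¹ ≠ 0 :=
    sub_ne_zero_of_ne (fun h => hE1 (inv_eq_one.mp h.symm))
  rw [eq_div_iff hB]
  field_simp
  ring

include hd h1S h1V in
lemma ffC : V = (1 - ((1 - V) / (1 - V * S)))
    / (1 - (S * ((1 - V) / (1 - V * S)))) := by
  have hB := ff1SE S V hd h1S
  rw [eq_div_iff hB]
  field_simp
  ring

include hd h1S h1V hV0 in
lemma ffC' : V⁻¹ = (1 - (S * ((1 - V) / (1 - V * S))))
    / (1 - ((1 - V) / (1 - V * S))) := by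
  have hB := ff1E S V hV0 hd h1S
  rw [eq_div_iff hB]
  field_simp
  ring

end fieldfacts

lemma psi_mul_aux (s v : kˣ) (hs : s ≠ 1) (hv : v ≠ 1) (hsv : s * v ≠ 1) :
    pb (s * v) + pb (s * v)⁻¹ = (pb s + pb s⁻¹) + (pb v + pb v⁻¹) := by
  have hS0 : (s : k) ≠ 0 := s.ne_zero
  have hV0 : (v : k) ≠ 0 := v.ne_zero
  have hS1 : (s : k) ≠ 1 := fun h => hs (Units.ext (by rw [Units.val_one]; exact h))
  have hV1 : (v : k) ≠ 1 := fun h => hv (Units.ext (by rw [Units.val_one]; exact h))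
  have hSV : (s : k) * (v : k) ≠ 1 := fun h =>
    hsv (Units.ext (by rw [Units.val_one, Units.val_mul]; exact h))
  have hd : (1 : k) - (v : k) * (s : k) ≠ 0 :=
    sub_ne_zero_of_ne (by rw [mul_comm]; exact hSV.symm)
  have h1S : (1 : k) - (s : k) ≠ 0 := sub_ne_zero_of_ne hS1.symm
  have h1V : (1 : k) - (v : k) ≠ 0 := sub_ne_zero_of_ne hV1.symm
  have hE0 := ffE0 (s : k) (v : k) hd h1V
  have hSE0 := ffSE0 (s : k) (v : k) hS0 hd h1S h1V
  have hxu1 : Units.mk0 _ hE0 ≠ 1 := fun h =>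
    ffE1 (s : k) (v : k) hV0 hd h1S (congrArg Units.val h)
  have hyu1 : Units.mk0 _ hSE0 ≠ 1 := fun h =>
    ffSE1 (s : k) (v : k) hd h1S (congrArg Units.val h)
  have hxyu : Units.mk0 _ hE0 ≠ Units.mk0 _ hSE0 := fun h =>
    ffne (s : k) (v : k) hd h1S h1V (congrArg Units.val h)
  have h1 : pb (Units.mk0 _ hE0) - pb (Units.mk0 _ hSE0) + pb s - pb (s * v) + pb v = 0 := by
    apply pb_five _ _ s (s * v) v hxu1 hyu1 hxyu
    · exact ffA (s : k) (v : k) hd h1S h1V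
    · rw [Units.val_mul]; exact ffB (s : k) (v : k) hS0 hV0 hd h1S h1V
    · exact ffC (s : k) (v : k) hd h1S h1V
  have h2 : pb (Units.mk0 _ hSE0) - pb (Units.mk0 _ hE0) + pb s⁻¹ - pb (s * v)⁻¹ + pb v⁻¹
      = 0 := by
    apply pb_five _ _ s⁻¹ (s * v)⁻¹ v⁻¹ hyu1 hxu1 hxyu.symm
    · rw [Units.val_inv_eq_inv_val]; exact ffA' (s : k) (v : k) hS0 hd h1S h1V
    · rw [Units.val_inv_eq_inv_val, Units.val_mul]
      exact ffB' (s : k) (v : k) hS0 hV0 hd h1S h1V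
    · rw [Units.val_inv_eq_inv_val]; exact ffC' (s : k) (v : k) hV0 hd h1S h1V
  have h3 : (pb (Units.mk0 _ hE0) - pb (Units.mk0 _ hSE0) + pb s - pb (s * v) + pb v)
      + (pb (Units.mk0 _ hSE0) - pb (Units.mk0 _ hE0) + pb s⁻¹ - pb (s * v)⁻¹ + pb v⁻¹)
      = 0 := by
    rw [h1, h2, add_zero]
  rw [← sub_eq_zero]
  calc pb (s * v) + pb (s * v)⁻¹ - ((pb s + pb s⁻¹) + (pb v + pb v⁻¹))
      = -((pb (Units.mk0 _ hE0) - pb (Units.mk0 _ hSE0) + pb s - pb (s * v) + pb v)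
          + (pb (Units.mk0 _ hSE0) - pb (Units.mk0 _ hE0) + pb s⁻¹ - pb (s * v)⁻¹
            + pb v⁻¹)) := by abel
    _ = 0 := by rw [h3, neg_zero]

lemma exists_c (k : Type) [Field k] (hk : 4 ≤ Nat.card k ∨ Infinite k) (a : kˣ) :
    ∃ c : kˣ, c ≠ 1 ∧ c ≠ a⁻¹ := by
  classical
  have hex : ∃ c : k, c ∉ ({0, 1, ((a⁻¹ : kˣ) : k)} : Finset k) := by
    rcases hk with h4 | hinf
    · have hfin : Finite k := Nat.finite_of_card_ne_zero (by omega)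
      haveI := Fintype.ofFinite k
      by_contra hc
      push_neg at hc
      have hsub : (Finset.univ : Finset k) ⊆ {0, 1, ((a⁻¹ : kˣ) : k)} := fun x _ => hc x
      have hle := Finset.card_le_card hsub
      have h3 : ({0, 1, ((a⁻¹ : kˣ) : k)} : Finset k).card ≤ 3 := by
        apply (Finset.card_insert_le _ _).trans
        apply Nat.succ_le_succ
        apply (Finset.card_insert_le _ _).trans
        simp
      rw [Finset.card_univ] at hle
      rw [Nat.card_eq_fintype_card] at h4
      omega
    · exact Infinite.exists_notMem_finset _
  obtain ⟨c, hc⟩ := hex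
  simp only [Finset.mem_insert, Finset.mem_singleton, not_or] at hc
  obtain ⟨hc0, hc1, hca⟩ := hc
  refine ⟨Units.mk0 c hc0, ?_, ?_⟩
  · exact fun h => hc1 (by rw [← Units.val_one, ← h]; rfl)
  · exact fun h => hca (by rw [← h]; rfl)

lemma psi_two (k : Type) [Field k] (hk : 4 ≤ Nat.card k ∨ Infinite k) (a : kˣ) :
    2 • (pb a + pb a⁻¹) = 0 := by
  by_cases ha : a = 1
  · subst ha; simp [pb_one, inv_one]
  · obtain ⟨c, hc1, hca⟩ := exists_c k hk a
    have hac : a * c ≠ 1 := fun h => hca (inv_eq_of_mul_eq_one_right h).symm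
    have h1 := psi_mul_aux a c ha hc1 hac
    have hainv : a⁻¹ ≠ 1 := fun h => ha (by rw [← inv_inv a, h, inv_one])
    have h2 := psi_mul_aux a⁻¹ (a * c) hainv hac (by rw [inv_mul_cancel_left]; exact hc1)
    rw [inv_mul_cancel_left, h1, inv_inv] at h2
    calc 2 • (pb a + pb a⁻¹)
        = ((pb a⁻¹ + pb a) + ((pb a + pb a⁻¹) + (pb c + pb c⁻¹))) - (pb c + pb c⁻¹) := by
          rw [two_smul]; abel
      _ = 0 := by rw [← h2, sub_self]

lemma psi_mul (k : Type) [Field k] (hk : 4 ≤ Nat.card k ∨ Infinite k) (x y : kˣ) :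
    pb (x * y) + pb (x * y)⁻¹ = (pb x + pb x⁻¹) + (pb y + pb y⁻¹) := by
  by_cases hx : x = 1
  · subst hx; simp [pb_one, inv_one]
  by_cases hy : y = 1
  · subst hy; simp [pb_one, inv_one]
  by_cases hxy : x * y = 1
  · have hy' : y = x⁻¹ := (inv_eq_of_mul_eq_one_right hxy).symm
    subst hy'
    rw [mul_inv_cancel, inv_one, pb_one, inv_inv, add_zero]
    have h2 := psi_two k hk x
    rw [two_smul] at h2
    calc (0 : PreBloch k) = (pb x + pb x⁻¹) + (pb x + pb x⁻¹) := h2.symm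
      _ = (pb x + pb x⁻¹) + (pb x⁻¹ + pb x) := by abel
  · exact psi_mul_aux x y hx hy hxy

end aux

/-- In the pre-Bloch group of a field with at least 4 elements, the elements
`ψ(x) = [x] + [x⁻¹]` satisfy `2·ψ(x) = 0` and `ψ(xy) = ψ(x) + ψ(y)`; in particular `ψ` is a
group homomorphism to the 2-torsion subgroup. -/
theorem stmt3 (k : Type) [Field k] (hk : 4 ≤ Nat.card k ∨ Infinite k) :
    (∀ x : kˣ, 2 • (pb x + pb x⁻¹) = 0) ∧
    (∀ x y : kˣ, pb (x * y) + pb (x * y)⁻¹ = (pb x + pb x⁻¹) + (pb y + pb y⁻¹)) ∧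
    ∃ ψ : Additive kˣ →+ PreBloch k,
      ∀ x : kˣ, ψ (Additive.ofMul x) = pb x + pb x⁻¹ ∧
        2 • ψ (Additive.ofMul x) = 0 := by
  refine ⟨psi_two k hk, psi_mul k hk, ?_⟩
  refine ⟨AddMonoidHom.mk' (fun a => pb a.toMul + pb a.toMul⁻¹) ?_, ?_⟩
  · intro a b
    exact psi_mul k hk a.toMul b.toMul
  · intro x
    exact ⟨rfl, psi_two k hk x⟩
end

section
/- In the pre-Bloch group P(k) of a field k with at least 4 elements, the element [x] + [1−x] is independent of the choice of x ∈ k^× \ {1}, and this constant element C_k has order dividing 6. -/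
namespace Stmt4Aux
variable {k : Type} [Field k]

lemma pb_congr {a b : kˣ} (h : (a : k) = b) : pb a = pb b := by
  congr 1
  exact Units.ext h

lemma pb_one : pb (1 : kˣ) = 0 := by
  apply (QuotientAddGroup.eq_zero_iff _).mpr
  exact AddSubgroup.subset_closure (Set.mem_union_left _ rfl)

lemma rel (x y z u v : kˣ) (hx : (x : k) ≠ 1) (hy : (y : k) ≠ 1) (hxy : (x : k) ≠ (y : k))
    (hz : (z : k) = (y : k) / (x : k))
    (hu : (u : k) = (1 - (x : k)⁻¹) / (1 - (y : k)⁻¹))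
    (hv : (v : k) = (1 - (x : k)) / (1 - (y : k))) :
    pb x - pb y + pb z - pb u + pb v = 0 := by
  have h : pb x - pb y + pb z - pb u + pb v =
      QuotientAddGroup.mk (FreeAbelianGroup.of x - FreeAbelianGroup.of y + FreeAbelianGroup.of z
        - FreeAbelianGroup.of u + FreeAbelianGroup.of v) := rfl
  rw [h]
  apply (QuotientAddGroup.eq_zero_iff _).mpr
  apply AddSubgroup.subset_closure
  apply Set.mem_union_right
  exact ⟨x, y, z, u, v, fun h => hx (by rw [h]; simp), fun h => hy (by rw [h]; simp),
    fun h => hxy (by rw [h]), hz, hu, hv, rfl⟩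

open scoped Classical in
/-- `P a = [a]` for `a ≠ 0`, and `0` for `a = 0`. -/
noncomputable def P (a : k) : PreBloch k := if h : a = 0 then 0 else pb (Units.mk0 a h)

lemma P_eq {a : k} (h : a ≠ 0) : P a = pb (Units.mk0 a h) := by rw [P]; exact dif_neg h

lemma pb_eq_P (x : kˣ) : pb x = P (x : k) := by
  rw [P_eq x.ne_zero]
  exact pb_congr rfl

lemma P_one : P (1 : k) = 0 := by
  rw [P_eq one_ne_zero, show Units.mk0 (1:k) one_ne_zero = 1 from Units.ext rfl, pb_one]

lemma P_congr {a b : k} (h : a = b) : P a = P b := by rw [h]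

/-- Five-term relation at the level of field elements. -/
lemma relP {a b : k} (ha0 : a ≠ 0) (ha1 : a ≠ 1) (hb0 : b ≠ 0) (hb1 : b ≠ 1) (hab : a ≠ b) :
    P a - P b + P (b / a) - P ((1 - a⁻¹) / (1 - b⁻¹)) + P ((1 - a) / (1 - b)) = 0 := by
  have ha1' : 1 - a ≠ 0 := sub_ne_zero.mpr (fun h => ha1 h.symm)
  have hb1' : 1 - b ≠ 0 := sub_ne_zero.mpr (fun h => hb1 h.symm)
  have ha1i : 1 - a⁻¹ ≠ 0 := by
    rw [sub_ne_zero]; intro h; exact ha1 (inv_eq_one.mp h.symm)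
  have hb1i : 1 - b⁻¹ ≠ 0 := by
    rw [sub_ne_zero]; intro h; exact hb1 (inv_eq_one.mp h.symm)
  rw [P_eq ha0, P_eq hb0, P_eq (div_ne_zero hb0 ha0), P_eq (div_ne_zero ha1i hb1i),
    P_eq (div_ne_zero ha1' hb1')]
  exact rel _ _ _ _ _ ha1 hb1 hab rfl rfl rfl

end Stmt4Aux

namespace Stmt4Aux
variable {k : Type} [Field k]

/-- `Sg a = [a] + [a⁻¹]`. -/
noncomputable def Sg (a : k) : PreBloch k := P a + P a⁻¹

lemma Sg_rel {a b : k} (ha0 : a ≠ 0) (ha1 : a ≠ 1) (hb0 : b ≠ 0) (hb1 : b ≠ 1) (hab : a ≠ b) :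
    Sg a - Sg b + Sg (b / a) = 0 := by
  have h1 := relP ha0 ha1 hb0 hb1 hab
  have ha0' : a⁻¹ ≠ 0 := inv_ne_zero ha0
  have hb0' : b⁻¹ ≠ 0 := inv_ne_zero hb0
  have h2 := relP ha0' (by simpa using ha1) hb0' (by simpa using hb1)
    (fun h => hab (by rw [inv_inj] at h; exact h))
  rw [P_congr (show b⁻¹ / a⁻¹ = (b/a)⁻¹ by field_simp),
    P_congr (show (1 - a⁻¹⁻¹) / (1 - b⁻¹⁻¹) = (1 - a) / (1 - b) by rw [inv_inv, inv_inv])] at h2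
  unfold Sg
  linear_combination (norm := abel1) h1 + h2

end Stmt4Aux

namespace Stmt4Aux
variable {k : Type} [Field k]

lemma exists_ne (hk : 4 ≤ Nat.card k ∨ Infinite k) (a b c : k) :
    ∃ d : k, d ≠ a ∧ d ≠ b ∧ d ≠ c := by
  by_contra h
  push_neg at h
  have hsub : (Set.univ : Set k) ⊆ {a, b, c} := by
    intro d _
    rcases eq_or_ne d a with h1 | h1
    · exact Or.inl h1
    rcases eq_or_ne d b with h2 | h2
    · exact Or.inr (Or.inl h2)
    · exact Or.inr (Or.inr (h d h1 h2))
  have hfin : (Set.univ : Set k).Finite := Set.Finite.subset (Set.toFinite _) hsub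
  have hcard : Nat.card k ≤ 3 := by
    calc Nat.card k = (Set.univ : Set k).ncard := (Set.ncard_univ k).symm
      _ ≤ ({a, b, c} : Set k).ncard := Set.ncard_le_ncard hsub (Set.toFinite _)
      _ ≤ 3 := by
          calc ({a, b, c} : Set k).ncard ≤ ({b, c} : Set k).ncard + 1 := Set.ncard_insert_le _ _
            _ ≤ (({c} : Set k).ncard + 1) + 1 := by
                have := Set.ncard_insert_le b ({c} : Set k); omega
            _ ≤ 3 := by rw [Set.ncard_singleton]
  rcases hk with hk | hk
  · omega
  · exact (Set.infinite_univ (α := k)) hfin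

lemma Sg_congr {a b : k} (h : a = b) : Sg a = Sg b := by rw [h]

lemma Sg_inv {a : k} : Sg a⁻¹ = Sg a := by
  unfold Sg
  rw [inv_inv, add_comm]

lemma Sg_two (hk : 4 ≤ Nat.card k ∨ Infinite k) {a : k} (ha0 : a ≠ 0) :
    Sg a + Sg a = 0 := by
  rcases eq_or_ne a 1 with rfl | ha1
  · unfold Sg
    rw [inv_one, P_one]
    simp
  · obtain ⟨d, hd0, hd1, hda⟩ := exists_ne hk 0 1 a⁻¹
    have hprod0 : a * d ≠ 0 := mul_ne_zero ha0 hd0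
    have hprod1 : a * d ≠ 1 := by
      intro h
      exact hda (by field_simp [eq_comm] at h ⊢; linear_combination h)
    have hdp : d ≠ a * d := by
      intro h
      apply ha1
      field_simp at h
      tauto
    have h1 := Sg_rel hd0 hd1 hprod0 hprod1 hdp
    have h2 := Sg_rel hprod0 hprod1 hd0 hd1 hdp.symm
    rw [Sg_congr (show a * d / d = a by field_simp)] at h1
    rw [Sg_congr (show d / (a * d) = a⁻¹ by field_simp), Sg_inv] at h2
    linear_combination (norm := abel1) h1 + h2
end Stmt4Aux

namespace Stmt4Aux
variable {k : Type} [Field k]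

/-- Constancy of `[a] + [1-a]`. -/
lemma constP {a b : k} (ha0 : a ≠ 0) (ha1 : a ≠ 1) (hb0 : b ≠ 0) (hb1 : b ≠ 1) :
    P a + P (1 - a) = P b + P (1 - b) := by
  rcases eq_or_ne a b with rfl | hab
  · rfl
  have ha1' : 1 - a ≠ 0 := sub_ne_zero.mpr (fun h => ha1 h.symm)
  have hb1' : 1 - b ≠ 0 := sub_ne_zero.mpr (fun h => hb1 h.symm)
  have ha1i : 1 - a⁻¹ ≠ 0 := by
    rw [sub_ne_zero]; intro h; exact ha1 (inv_eq_one.mp h.symm)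
  have hb1i : 1 - b⁻¹ ≠ 0 := by
    rw [sub_ne_zero]; intro h; exact hb1 (inv_eq_one.mp h.symm)
  have hba0 : b / a ≠ 0 := div_ne_zero hb0 ha0
  have hba1 : b / a ≠ 1 := fun h => hab ((div_eq_one_iff_eq ha0).mp h).symm
  have hw0 : (1 - a⁻¹) / (1 - b⁻¹) ≠ 0 := div_ne_zero ha1i hb1i
  have hw1 : (1 - a⁻¹) / (1 - b⁻¹) ≠ 1 := fun h =>
    hab (inv_injective (sub_right_injective ((div_eq_one_iff_eq hb1i).mp h)))
  have ht1 : (1 - a) / (1 - b) ≠ 1 := fun h =>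
    hab (sub_right_injective ((div_eq_one_iff_eq hb1').mp h))
  have hwt : ((1 - a⁻¹) / (1 - b⁻¹)) / (b / a) = (1 - a) / (1 - b) := by
    rw [show (1:k) - a⁻¹ = (a-1)/a by field_simp, show (1:k) - b⁻¹ = (b-1)/b by field_simp,
      div_eq_div_iff (div_ne_zero hb0 ha0) hb1']
    field_simp [sub_ne_zero.mpr ha1, sub_ne_zero.mpr hb1]
    ring
  have hbaw : b / a ≠ (1 - a⁻¹) / (1 - b⁻¹) := by
    intro h
    apply ht1
    rw [← hwt, ← h, div_self hba0]
  have h1 := relP ha0 ha1 hb0 hb1 hab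
  have h2 := relP ha1' (fun h => ha0 (by linear_combination -h))
    hb1' (fun h => hb0 (by linear_combination -h))
    (fun h => hab (sub_right_injective h))
  rw [P_congr (show (1 - b) / (1 - a) = ((1 - a) / (1 - b))⁻¹ by rw [inv_div]),
    P_congr (show (1 - (1-a)⁻¹) / (1 - (1-b)⁻¹) = ((1 - a⁻¹) / (1 - b⁻¹))⁻¹ by
      rw [show (1:k) - (1-a)⁻¹ = (1 - a⁻¹)⁻¹ from
          (inv_eq_of_mul_eq_one_right (by field_simp; ring)).symm,
        show (1:k) - (1-b)⁻¹ = (1 - b⁻¹)⁻¹ from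
          (inv_eq_of_mul_eq_one_right (by field_simp; ring)).symm,
        inv_div, inv_div_inv]),
    P_congr (show (1 - (1-a)) / (1 - (1-b)) = (b / a)⁻¹ by
      rw [inv_div]; congr 1 <;> ring)] at h2
  have h3 := Sg_rel hba0 hba1 hw0 hw1 hbaw
  rw [Sg_congr hwt] at h3
  unfold Sg at h3
  linear_combination (norm := abel1) h1 + h2 - h3

lemma sixP (hk : 4 ≤ Nat.card k ∨ Infinite k) {a : k} (ha0 : a ≠ 0) (ha1 : a ≠ 1) :
    6 • (P a + P (1 - a)) = 0 := by
  have ha1' : 1 - a ≠ 0 := sub_ne_zero.mpr (fun h => ha1 h.symm)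
  have ha1i : 1 - a⁻¹ ≠ 0 := by
    rw [sub_ne_zero]; intro h; exact ha1 (inv_eq_one.mp h.symm)
  have hai0 : a⁻¹ ≠ 0 := inv_ne_zero ha0
  have hai1 : a⁻¹ ≠ 1 := by simpa using ha1
  have hia0 : (1 - a)⁻¹ ≠ 0 := inv_ne_zero ha1'
  have hia1 : (1 - a)⁻¹ ≠ 1 := fun h => ha0 (by
    have h2 := inv_eq_one.mp h
    linear_combination -h2)
  have e1 := constP hai0 hai1 ha0 ha1
  have e2 := constP hia0 hia1 ha0 ha1
  rw [P_congr (show 1 - (1-a)⁻¹ = (1 - a⁻¹)⁻¹ from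
    (inv_eq_of_mul_eq_one_right (by field_simp; ring)).symm)] at e2
  have s1 := Sg_two hk ha0
  have s2 := Sg_two hk ha1'
  have s3 := Sg_two hk ha1i
  unfold Sg at s1 s2 s3
  linear_combination (norm := abel1) s1 + s2 + s3 - e1 - e1 - e2 - e2

end Stmt4Aux

/-- In the pre-Bloch group of a field with at least 4 elements, the element
`[x] + [1−x]` is independent of `x ∈ k^× \ {1}`, and this constant element has order
dividing 6. -/
theorem stmt4 (k : Type) [Field k] (hk : 4 ≤ Nat.card k ∨ Infinite k) :
    (∀ x y u v : kˣ, (x : k) ≠ 1 → (y : k) ≠ 1 →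
      (u : k) = 1 - (x : k) → (v : k) = 1 - (y : k) →
      pb x + pb u = pb y + pb v) ∧
    (∀ x u : kˣ, (x : k) ≠ 1 → (u : k) = 1 - (x : k) →
      6 • (pb x + pb u) = 0) := by
  constructor
  · intro x y u v hx hy hu hv
    rw [Stmt4Aux.pb_eq_P x, Stmt4Aux.pb_eq_P u, Stmt4Aux.pb_eq_P y, Stmt4Aux.pb_eq_P v,
      Stmt4Aux.P_congr hu, Stmt4Aux.P_congr hv]
    exact Stmt4Aux.constP x.ne_zero hx y.ne_zero hy
  · intro x u hx hu
    rw [Stmt4Aux.pb_eq_P x, Stmt4Aux.pb_eq_P u, Stmt4Aux.P_congr hu]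
    exact Stmt4Aux.sixP hk x.ne_zero hx
end
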